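/- For every ε ∈ (0,1) there exist C > 0 and N₀ ∈ ℕ with the following property. For every n ≥ N₀ and every finite nonempty S ⊂ [0,1) satisfying |τ − τ'|_T ≥ C(1 + log|S|)/n for all distinct τ, τ' ∈ S, any coefficients a, b : S → ℂ for which the function η(θ) = Σ_{τ∈S} ( a_τ·D_N(θ−τ) + b_τ·D_N'(θ−τ) ) satisfies η(τ) = 1 and η'(τ) = 0 for all τ ∈ S must obey: max_{τ∈S} |a_τ| ≤ 1 + ε, min_{τ∈S} Re(a_τ) ≥ 1 − ε, and max_{τ∈S} |b_τ| ≤ ε/n. -/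

import Mathlib

/-- The normalized Dirichlet kernel `D_N(θ) = (1/(2n+1)) ∑_{k=-n}^{n} e^{2πikθ}`. -/
noncomputable def DN (n : ℕ) (θ : ℝ) : ℝ :=
  (1 / (2 * (n : ℝ) + 1)) *
    (∑ k ∈ Finset.Icc (-(n : ℤ)) (n : ℤ),
      Complex.exp (2 * (Real.pi : ℂ) * Complex.I * (k : ℂ) * (θ : ℂ))).re

/-- The wrap-around (modulo 1) distance `|x|_T = min_{m ∈ ℤ} |x − m|`. -/
noncomputable def torusDist (x : ℝ) : ℝ :=
  sInf (Set.range fun m : ℤ => |x - (m : ℝ)|)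


lemma torusDist_eq_round (x : ℝ) : torusDist x = |x - (round x : ℝ)| := by
  unfold torusDist
  apply le_antisymm
  · exact csInf_le ⟨0, fun y hy => by obtain ⟨m, rfl⟩ := hy; positivity⟩ ⟨round x, rfl⟩
  · exact le_csInf ⟨|x|, 0, by simp⟩ (by rintro y ⟨m, rfl⟩; exact round_le x m)

lemma torusDist_eq_min (x : ℝ) : torusDist x = min (Int.fract x) (1 - Int.fract x) := by
  rw [torusDist_eq_round, abs_sub_round_eq_min]

lemma torusDist_nonneg (x : ℝ) : 0 ≤ torusDist x := by
  rw [torusDist_eq_round]; positivity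

lemma torusDist_le_abs (x : ℝ) : torusDist x ≤ |x| := by
  have := csInf_le (⟨0, fun y hy => by obtain ⟨m, rfl⟩ := hy; positivity⟩ :
    BddBelow (Set.range fun m : ℤ => |x - (m : ℝ)|)) ⟨(0 : ℤ), rfl⟩
  simp at this; exact this

lemma torusDist_neg (x : ℝ) : torusDist (-x) = torusDist x := by
  unfold torusDist
  congr 1
  ext y
  constructor
  · rintro ⟨m, rfl⟩; exact ⟨-m, by push_cast; rw [← abs_neg]; ring_nf⟩
  · rintro ⟨m, rfl⟩; exact ⟨-m, by push_cast; rw [← abs_neg]; ring_nf⟩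

lemma torusDist_add_int (x : ℝ) (m : ℤ) : torusDist (x + m) = torusDist x := by
  unfold torusDist
  congr 1
  ext y
  constructor
  · rintro ⟨j, rfl⟩; exact ⟨j - m, by push_cast; ring_nf⟩
  · rintro ⟨j, rfl⟩; exact ⟨j + m, by push_cast; ring_nf⟩

lemma torusDist_fract (x : ℝ) : torusDist (Int.fract x) = torusDist x := by
  have : Int.fract x = x + (-⌊x⌋ : ℤ) := by rw [Int.fract]; push_cast; ring
  rw [this, torusDist_add_int]

/-- Jordan-type bound: `2 |x|_T ≤ |sin (π x)|`. -/
lemma two_torusDist_le_abs_sin (x : ℝ) : 2 * torusDist x ≤ |Real.sin (Real.pi * x)| := by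
  have hr : |x - (round x : ℝ)| ≤ 1/2 := abs_sub_round x
  set r := x - (round x : ℝ) with hrdef
  have hx : x = (round x : ℝ) + r := by ring
  have hsin : |Real.sin (Real.pi * x)| = |Real.sin (Real.pi * r)| := by
    rw [hx, mul_add, Real.sin_add, mul_comm Real.pi ((round x : ℝ)), Real.sin_int_mul_pi,
      zero_mul, zero_add, abs_mul]
    have : |Real.cos ((round x : ℝ) * Real.pi)| = 1 := by
      rw [abs_eq (by norm_num : (0:ℝ) ≤ 1)]
      rcases Int.even_or_odd (round x) with ⟨k, hk⟩ | ⟨k, hk⟩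
      · left; rw [hk]; push_cast
        rw [show ((k : ℝ) + k) * Real.pi = (k : ℝ) * (2 * Real.pi) by ring,
          Real.cos_int_mul_two_pi]
      · right; rw [hk]; push_cast
        rw [show ((2 * k : ℝ) + 1) * Real.pi = Real.pi + (k : ℝ) * (2 * Real.pi) by ring,
          Real.cos_add_int_mul_two_pi, Real.cos_pi]
    rw [this, one_mul]
  rw [hsin, torusDist_eq_round, ← hrdef]
  have h1 : |Real.sin (Real.pi * r)| = Real.sin (Real.pi * |r|) := by
    rcases abs_cases r with ⟨h, _⟩ | ⟨h, _⟩
    · rw [h, abs_eq_self]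
      apply Real.sin_nonneg_of_nonneg_of_le_pi
      · positivity
      · nlinarith [Real.pi_pos, abs_nonneg r]
    · rw [abs_of_nonpos (Real.sin_nonpos_of_nonpos_of_neg_pi_le
        (by nlinarith [Real.pi_pos]) (by nlinarith [Real.pi_pos, abs_nonneg r])),
        h, mul_neg, Real.sin_neg]
  rw [h1]
  have := Real.mul_le_sin (x := Real.pi * |r|) (by positivity)
    (by nlinarith [Real.pi_pos])
  calc 2 * |r| = 2 / Real.pi * (Real.pi * |r|) := by
        rw [div_mul_eq_mul_div, eq_div_iff (ne_of_gt Real.pi_pos)]; ring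
    _ ≤ Real.sin (Real.pi * |r|) := this


/-- First derivative of `DN`. -/
noncomputable def DN1 (n : ℕ) (θ : ℝ) : ℝ :=
  (1 / (2 * (n : ℝ) + 1)) *
    ∑ k ∈ Finset.Icc (-(n : ℤ)) (n : ℤ),
      -(Real.sin (2 * Real.pi * k * θ)) * (2 * Real.pi * k)

/-- Second derivative of `DN`. -/
noncomputable def DN2 (n : ℕ) (θ : ℝ) : ℝ :=
  (1 / (2 * (n : ℝ) + 1)) *
    ∑ k ∈ Finset.Icc (-(n : ℤ)) (n : ℤ),
      -(Real.cos (2 * Real.pi * k * θ) * (2 * Real.pi * k)) * (2 * Real.pi * k)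

lemma DN_eq (n : ℕ) (θ : ℝ) :
    DN n θ = (1 / (2 * (n : ℝ) + 1)) *
      ∑ k ∈ Finset.Icc (-(n : ℤ)) (n : ℤ), Real.cos (2 * Real.pi * k * θ) := by
  unfold DN
  congr 1
  rw [Complex.re_sum]
  apply Finset.sum_congr rfl
  intro k _
  rw [show 2 * (Real.pi : ℂ) * Complex.I * (k : ℂ) * (θ : ℂ)
      = ((2 * Real.pi * k * θ : ℝ) : ℂ) * Complex.I by push_cast; ring,
    Complex.exp_ofReal_mul_I_re]

lemma hasDerivAt_DN (n : ℕ) (θ : ℝ) : HasDerivAt (DN n) (DN1 n θ) θ := by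
  have : DN n = fun θ => (1 / (2 * (n : ℝ) + 1)) *
      ∑ k ∈ Finset.Icc (-(n : ℤ)) (n : ℤ), Real.cos (2 * Real.pi * k * θ) := by
    funext θ; exact DN_eq n θ
  rw [this]
  have h := (HasDerivAt.sum (u := Finset.Icc (-(n : ℤ)) (n : ℤ))
    (fun k _ => (((hasDerivAt_id θ).const_mul (2 * Real.pi * (k:ℝ))).cos))).const_mul
    (1 / (2 * (n : ℝ) + 1))
  simpa [DN1, mul_one] using h

lemma hasDerivAt_DN1 (n : ℕ) (θ : ℝ) : HasDerivAt (DN1 n) (DN2 n θ) θ := by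
  unfold DN1 DN2
  refine (HasDerivAt.fun_sum fun k _ => ?_).const_mul _
  have h := (((hasDerivAt_id θ).const_mul (2 * Real.pi * (k:ℝ))).sin).neg.mul_const
    (2 * Real.pi * (k:ℝ))
  simpa [mul_one] using h

lemma deriv_DN (n : ℕ) : deriv (DN n) = DN1 n := by
  funext θ; exact (hasDerivAt_DN n θ).deriv

lemma deriv_DN1 (n : ℕ) : deriv (DN1 n) = DN2 n := by
  funext θ; exact (hasDerivAt_DN1 n θ).deriv

lemma card_Icc_n (n : ℕ) : (Finset.Icc (-(n : ℤ)) (n : ℤ)).card = 2 * n + 1 := by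
  rw [Int.card_Icc]
  omega

lemma twon1_pos (n : ℕ) : (0:ℝ) < 2 * (n:ℝ) + 1 := by positivity

lemma DN_zero (n : ℕ) : DN n 0 = 1 := by
  rw [DN_eq]
  simp [card_Icc_n n]
  have := twon1_pos n
  field_simp

lemma DN1_zero (n : ℕ) : DN1 n 0 = 0 := by
  unfold DN1
  simp

lemma sum_sq_Icc (n : ℕ) :
    ∑ k ∈ Finset.Icc (-(n : ℤ)) (n : ℤ), ((k:ℝ))^2
      = (n:ℝ) * ((n:ℝ) + 1) * (2 * (n:ℝ) + 1) / 3 := by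
  induction n with
  | zero => simp
  | succ m ih =>
    have h1 : (((m:ℤ) + 1) : ℤ) ∉ Finset.Icc (-(m : ℤ)) (m : ℤ) := by
      simp only [Finset.mem_Icc]; omega
    have h2 : (-((m:ℤ) + 1) : ℤ) ∉ insert ((m:ℤ)+1) (Finset.Icc (-(m : ℤ)) (m : ℤ)) := by
      simp only [Finset.mem_insert, Finset.mem_Icc]; omega
    have hset : Finset.Icc (-((m:ℕ)+1 : ℤ)) (((m:ℕ)+1 : ℤ))
        = insert (-((m:ℤ)+1)) (insert ((m:ℤ)+1) (Finset.Icc (-(m : ℤ)) (m : ℤ))) := by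
      ext x
      simp only [Finset.mem_Icc, Finset.mem_insert]
      omega
    push_cast
    rw [hset, Finset.sum_insert h2, Finset.sum_insert h1, ih]
    push_cast
    ring

lemma DN2_zero (n : ℕ) : DN2 n 0 = -(4 * Real.pi^2 / 3 * n * (n+1)) := by
  unfold DN2
  have : ∀ k ∈ Finset.Icc (-(n : ℤ)) (n : ℤ),
      -(Real.cos (2 * Real.pi * k * 0) * (2 * Real.pi * k)) * (2 * Real.pi * k)
        = -(4 * Real.pi^2) * ((k:ℝ))^2 := by
    intro k _; rw [mul_zero, Real.cos_zero]; ring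
  rw [Finset.sum_congr rfl this, ← Finset.mul_sum, sum_sq_Icc]
  have := twon1_pos n
  field_simp


lemma sum_cos_mul_sin (n : ℕ) (x : ℝ) :
    (∑ k ∈ Finset.Icc (-(n : ℤ)) (n : ℤ), Real.cos (2 * (k:ℝ) * x)) * Real.sin x
      = Real.sin ((2 * (n:ℝ) + 1) * x) := by
  induction n with
  | zero => simp
  | succ m ih =>
    have h1 : (((m:ℤ) + 1) : ℤ) ∉ Finset.Icc (-(m : ℤ)) (m : ℤ) := by
      simp only [Finset.mem_Icc]; omega
    have h2 : (-((m:ℤ) + 1) : ℤ) ∉ insert ((m:ℤ)+1) (Finset.Icc (-(m : ℤ)) (m : ℤ)) := by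
      simp only [Finset.mem_insert, Finset.mem_Icc]; omega
    have hset : Finset.Icc (-((m:ℕ)+1 : ℤ)) (((m:ℕ)+1 : ℤ))
        = insert (-((m:ℤ)+1)) (insert ((m:ℤ)+1) (Finset.Icc (-(m : ℤ)) (m : ℤ))) := by
      ext x
      simp only [Finset.mem_Icc, Finset.mem_insert]
      omega
    push_cast
    rw [hset, Finset.sum_insert h2, Finset.sum_insert h1]
    push_cast
    rw [add_mul, add_mul, ih]
    have hcos : Real.cos (2 * (-((m:ℝ)+1)) * x) = Real.cos (2 * ((m:ℝ)+1) * x) := by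
      rw [show 2 * (-((m:ℝ)+1)) * x = -(2 * ((m:ℝ)+1) * x) by ring, Real.cos_neg]
    rw [hcos]
    have hs := Real.sin_sub_sin ((2*(m:ℝ)+3) * x) ((2*(m:ℝ)+1) * x)
    rw [show ((2*(m:ℝ)+3) * x - (2*(m:ℝ)+1) * x) / 2 = x by ring,
      show ((2*(m:ℝ)+3) * x + (2*(m:ℝ)+1) * x) / 2 = 2 * ((m:ℝ)+1) * x by ring] at hs
    have : (2 * ((m:ℝ)+1) + 1) * x = (2*(m:ℝ)+3) * x := by ring
    rw [this]
    linarith [hs]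

lemma hasDerivAt_sin_mul (c x : ℝ) :
    HasDerivAt (fun y => Real.sin (c * y)) (Real.cos (c * x) * c) x := by
  have h := ((hasDerivAt_id x).const_mul c).sin
  simpa only [id_eq, mul_one] using h

lemma hasDerivAt_cos_mul (c x : ℝ) :
    HasDerivAt (fun y => Real.cos (c * y)) (-Real.sin (c * x) * c) x := by
  have h := ((hasDerivAt_id x).const_mul c).cos
  simpa only [id_eq, mul_one] using h

/-- The fundamental identity `(2n+1) · DN(θ) · sin(πθ) = sin((2n+1)πθ)`. -/
lemma DN_identity (n : ℕ) (θ : ℝ) :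
    (2 * (n:ℝ) + 1) * DN n θ * Real.sin (Real.pi * θ)
      = Real.sin ((2 * (n:ℝ) + 1) * Real.pi * θ) := by
  rw [DN_eq]
  have h := sum_cos_mul_sin n (Real.pi * θ)
  have harg : ∀ k : ℤ, Real.cos (2 * (k:ℝ) * (Real.pi * θ)) = Real.cos (2 * Real.pi * k * θ) := by
    intro k; congr 1; ring
  rw [Finset.sum_congr rfl (fun k _ => harg k)] at h
  have h21 := (twon1_pos n).ne'
  rw [show (2 * (n:ℝ) + 1) * Real.pi * θ = (2 * (n:ℝ) + 1) * (Real.pi * θ) by ring]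
  field_simp
  rw [h]; ring_nf

lemma DN_fun_identity (n : ℕ) :
    (fun θ => (2 * (n:ℝ) + 1) * DN n θ * Real.sin (Real.pi * θ))
      = fun θ => Real.sin ((2 * (n:ℝ) + 1) * Real.pi * θ) := by
  funext θ; exact DN_identity n θ

/-- Differentiated identity. -/
lemma DN1_identity (n : ℕ) (θ : ℝ) :
    DN1 n θ * Real.sin (Real.pi * θ) + DN n θ * (Real.pi * Real.cos (Real.pi * θ))
      = Real.pi * Real.cos ((2 * (n:ℝ) + 1) * Real.pi * θ) := by
  have h21 := (twon1_pos n).ne'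
  have hs : HasDerivAt (fun θ : ℝ => Real.sin (Real.pi * θ))
      (Real.cos (Real.pi * θ) * Real.pi) θ := hasDerivAt_sin_mul Real.pi θ
  have hL : HasDerivAt (fun θ => (2 * (n:ℝ) + 1) * DN n θ * Real.sin (Real.pi * θ))
      ((2 * (n:ℝ) + 1) * DN1 n θ * Real.sin (Real.pi * θ)
        + (2 * (n:ℝ) + 1) * DN n θ * (Real.cos (Real.pi * θ) * Real.pi)) θ :=
    ((hasDerivAt_DN n θ).const_mul _).mul hs
  have hR : HasDerivAt (fun θ : ℝ => Real.sin ((2 * (n:ℝ) + 1) * Real.pi * θ))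
      (Real.cos ((2 * (n:ℝ) + 1) * Real.pi * θ) * ((2 * (n:ℝ) + 1) * Real.pi)) θ :=
    hasDerivAt_sin_mul _ θ
  have huniq := (DN_fun_identity n ▸ hL).unique hR
  have := mul_left_cancel₀ h21 (by linear_combination huniq :
    (2 * (n:ℝ) + 1) * (DN1 n θ * Real.sin (Real.pi * θ)
        + DN n θ * (Real.pi * Real.cos (Real.pi * θ)))
      = (2 * (n:ℝ) + 1) * (Real.pi * Real.cos ((2 * (n:ℝ) + 1) * Real.pi * θ)))
  exact this

lemma DN1_fun_identity (n : ℕ) :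
    (fun θ => DN1 n θ * Real.sin (Real.pi * θ) + DN n θ * (Real.pi * Real.cos (Real.pi * θ)))
      = fun θ => Real.pi * Real.cos ((2 * (n:ℝ) + 1) * Real.pi * θ) := by
  funext θ; exact DN1_identity n θ

/-- Twice differentiated identity. -/
lemma DN2_identity (n : ℕ) (θ : ℝ) :
    DN2 n θ * Real.sin (Real.pi * θ)
      = -(4 * Real.pi^2 * n * (n+1)) * DN n θ * Real.sin (Real.pi * θ)
        - 2 * Real.pi * DN1 n θ * Real.cos (Real.pi * θ) := by
  have hs : HasDerivAt (fun θ : ℝ => Real.sin (Real.pi * θ))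
      (Real.cos (Real.pi * θ) * Real.pi) θ := hasDerivAt_sin_mul Real.pi θ
  have hc : HasDerivAt (fun θ : ℝ => Real.pi * Real.cos (Real.pi * θ))
      (Real.pi * (-Real.sin (Real.pi * θ) * Real.pi)) θ := by
    have h := (hasDerivAt_cos_mul Real.pi θ).const_mul Real.pi
    simpa using h
  have hL : HasDerivAt (fun θ => DN1 n θ * Real.sin (Real.pi * θ)
        + DN n θ * (Real.pi * Real.cos (Real.pi * θ)))
      ((DN2 n θ * Real.sin (Real.pi * θ) + DN1 n θ * (Real.cos (Real.pi * θ) * Real.pi))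
        + (DN1 n θ * (Real.pi * Real.cos (Real.pi * θ))
            + DN n θ * (Real.pi * (-Real.sin (Real.pi * θ) * Real.pi)))) θ :=
    ((hasDerivAt_DN1 n θ).mul hs).add ((hasDerivAt_DN n θ).mul hc)
  have hR : HasDerivAt (fun θ : ℝ => Real.pi * Real.cos ((2 * (n:ℝ) + 1) * Real.pi * θ))
      (Real.pi * (-Real.sin ((2 * (n:ℝ) + 1) * Real.pi * θ) * ((2 * (n:ℝ) + 1) * Real.pi))) θ :=
    (hasDerivAt_cos_mul _ θ).const_mul Real.pi
  have huniq := (DN1_fun_identity n ▸ hL).unique hR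
  have hid : Real.sin ((2 * (n:ℝ) + 1) * Real.pi * θ)
      = (2 * (n:ℝ) + 1) * DN n θ * Real.sin (Real.pi * θ) := (DN_identity n θ).symm
  rw [hid] at huniq
  linear_combination huniq

/-- Pointwise bound on `DN`. -/
lemma abs_DN_le (n : ℕ) (θ : ℝ) (ht : 0 < torusDist θ) :
    |DN n θ| ≤ 1 / (2 * (2 * (n:ℝ) + 1) * torusDist θ) := by
  set t := torusDist θ with htdef
  have hsin := two_torusDist_le_abs_sin θ
  have hid := DN_identity n θ
  have h1 : (2 * (n:ℝ) + 1) * |DN n θ| * |Real.sin (Real.pi * θ)| ≤ 1 := by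
    have : |(2 * (n:ℝ) + 1) * DN n θ * Real.sin (Real.pi * θ)| ≤ 1 := by
      rw [hid]; exact Real.abs_sin_le_one _
    rw [abs_mul, abs_mul, abs_of_pos (twon1_pos n)] at this
    exact this
  have h2 : (2 * (n:ℝ) + 1) * |DN n θ| * (2 * t) ≤ 1 := by
    nlinarith [abs_nonneg (DN n θ), twon1_pos n]
  rw [le_div_iff₀ (by positivity)]
  nlinarith [twon1_pos n]

/-- Pointwise bound on `DN1`. -/
lemma abs_DN1_le (n : ℕ) (θ : ℝ) (ht : 0 < torusDist θ) :
    |DN1 n θ| ≤ Real.pi / (2 * torusDist θ) * (1 + |DN n θ|) := by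
  set t := torusDist θ with htdef
  have hsin := two_torusDist_le_abs_sin θ
  have hπ := Real.pi_pos
  have key : DN1 n θ * Real.sin (Real.pi * θ)
      = Real.pi * Real.cos ((2 * (n:ℝ) + 1) * Real.pi * θ)
        - DN n θ * (Real.pi * Real.cos (Real.pi * θ)) := by
    linear_combination DN1_identity n θ
  have hb1 : |Real.pi * Real.cos ((2 * (n:ℝ) + 1) * Real.pi * θ)| ≤ Real.pi := by
    rw [abs_mul, abs_of_pos hπ]
    nlinarith [Real.abs_cos_le_one ((2 * (n:ℝ) + 1) * Real.pi * θ)]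
  have hb2 : |DN n θ * (Real.pi * Real.cos (Real.pi * θ))| ≤ Real.pi * |DN n θ| := by
    rw [abs_mul, abs_mul, abs_of_pos hπ]
    calc |DN n θ| * (Real.pi * |Real.cos (Real.pi * θ)|)
        ≤ |DN n θ| * (Real.pi * 1) :=
          mul_le_mul_of_nonneg_left
            (mul_le_mul_of_nonneg_left (Real.abs_cos_le_one _) hπ.le) (abs_nonneg _)
      _ = Real.pi * |DN n θ| := by ring
  have habs : |DN1 n θ| * |Real.sin (Real.pi * θ)| ≤ Real.pi + Real.pi * |DN n θ| := by
    rw [← abs_mul, key]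
    calc |Real.pi * Real.cos ((2 * (n:ℝ) + 1) * Real.pi * θ)
          - DN n θ * (Real.pi * Real.cos (Real.pi * θ))|
        ≤ |Real.pi * Real.cos ((2 * (n:ℝ) + 1) * Real.pi * θ)|
          + |DN n θ * (Real.pi * Real.cos (Real.pi * θ))| := abs_sub _ _
      _ ≤ Real.pi + Real.pi * |DN n θ| := add_le_add hb1 hb2
  have h2 : |DN1 n θ| * (2 * t) ≤ Real.pi + Real.pi * |DN n θ| := by
    nlinarith [abs_nonneg (DN1 n θ)]
  rw [div_mul_eq_mul_div, le_div_iff₀ (by positivity)]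
  nlinarith [abs_nonneg (DN n θ)]

/-- Pointwise bound on `DN2`. -/
lemma abs_DN2_le (n : ℕ) (θ : ℝ) (ht : 0 < torusDist θ) :
    |DN2 n θ| ≤ 4 * Real.pi^2 * n * (n+1) * |DN n θ| + Real.pi / torusDist θ * |DN1 n θ| := by
  set t := torusDist θ with htdef
  have hsin := two_torusDist_le_abs_sin θ
  have hπ := Real.pi_pos
  have hid := DN2_identity n θ
  have hn2 : (0:ℝ) ≤ 4 * Real.pi^2 * (n:ℝ) * ((n:ℝ)+1) := by positivity
  have hb1 : |(-(4 * Real.pi^2 * (n:ℝ) * ((n:ℝ)+1))) * DN n θ * Real.sin (Real.pi * θ)|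
      ≤ 4 * Real.pi^2 * (n:ℝ) * ((n:ℝ)+1) * |DN n θ| * |Real.sin (Real.pi * θ)| := by
    rw [abs_mul, abs_mul, abs_neg, abs_of_nonneg hn2]
  have hb2 : |2 * Real.pi * DN1 n θ * Real.cos (Real.pi * θ)| ≤ 2 * Real.pi * |DN1 n θ| := by
    rw [abs_mul, abs_mul, abs_mul, show |(2:ℝ)| = 2 by norm_num, abs_of_pos hπ]
    calc 2 * Real.pi * |DN1 n θ| * |Real.cos (Real.pi * θ)|
        ≤ 2 * Real.pi * |DN1 n θ| * 1 :=
          mul_le_mul_of_nonneg_left (Real.abs_cos_le_one _) (by positivity)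
      _ = 2 * Real.pi * |DN1 n θ| := mul_one _
  have habs : |DN2 n θ| * |Real.sin (Real.pi * θ)|
      ≤ 4 * Real.pi^2 * (n:ℝ) * ((n:ℝ)+1) * |DN n θ| * |Real.sin (Real.pi * θ)|
        + 2 * Real.pi * |DN1 n θ| := by
    rw [← abs_mul, hid]
    calc |(-(4 * Real.pi^2 * (n:ℝ) * ((n:ℝ)+1))) * DN n θ * Real.sin (Real.pi * θ)
          - 2 * Real.pi * DN1 n θ * Real.cos (Real.pi * θ)|
        ≤ |(-(4 * Real.pi^2 * (n:ℝ) * ((n:ℝ)+1))) * DN n θ * Real.sin (Real.pi * θ)|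
          + |2 * Real.pi * DN1 n θ * Real.cos (Real.pi * θ)| := abs_sub _ _
      _ ≤ _ := add_le_add hb1 hb2
  have hspos : (0:ℝ) < |Real.sin (Real.pi * θ)| := lt_of_lt_of_le (by positivity) hsin
  rw [← mul_le_mul_iff_of_pos_right hspos]
  refine habs.trans ?_
  have hkey : 2 * Real.pi * |DN1 n θ| ≤ Real.pi / t * |DN1 n θ| * |Real.sin (Real.pi * θ)| := by
    rw [div_mul_eq_mul_div, div_mul_eq_mul_div, le_div_iff₀ ht]
    nlinarith [mul_nonneg (mul_nonneg hπ.le (abs_nonneg (DN1 n θ)))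
      (sub_nonneg.mpr hsin)]
  have hexp : (4 * Real.pi^2 * (n:ℝ) * ((n:ℝ)+1) * |DN n θ| + Real.pi / t * |DN1 n θ|)
        * |Real.sin (Real.pi * θ)|
      = 4 * Real.pi^2 * (n:ℝ) * ((n:ℝ)+1) * |DN n θ| * |Real.sin (Real.pi * θ)|
        + Real.pi / t * |DN1 n θ| * |Real.sin (Real.pi * θ)| := by ring
  rw [hexp]
  linarith

lemma harmonic_mono : Monotone harmonic := by
  apply monotone_nat_of_le_succ
  intro n
  rw [harmonic_succ]
  exact le_add_of_nonneg_right (by positivity)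

/-- Sum of reciprocals of distinct positive integers is at most the harmonic number. -/
lemma sum_inv_le_harmonic (V : Finset ℤ) (hV : ∀ v ∈ V, 1 ≤ v) :
    ∑ v ∈ V, (1 : ℝ) / (v : ℝ) ≤ (harmonic V.card : ℝ) := by
  suffices H : ∀ (N : ℕ) (V : Finset ℤ), (∀ v ∈ V, 1 ≤ v) → V.card = N →
      ∑ v ∈ V, (1 : ℝ) / (v : ℝ) ≤ (harmonic V.card : ℝ) by
    exact H V.card V hV rfl
  intro N
  induction N with
  | zero =>
    intro V hV hN
    rw [Finset.card_eq_zero] at hN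
    simp [hN]
  | succ N ih =>
    intro V hV hN
    have hne : V.Nonempty := Finset.card_pos.mp (by omega)
    set M := V.max' hne with hMdef
    have hMmem : M ∈ V := V.max'_mem hne
    have hM1 : 1 ≤ M := hV M hMmem
    have hsub : V ⊆ Finset.Icc 1 M := fun v hv =>
      Finset.mem_Icc.mpr ⟨hV v hv, V.le_max' v hv⟩
    have hcard : (N:ℤ) + 1 ≤ M := by
      have h := Finset.card_le_card hsub
      rw [Int.card_Icc] at h
      omega
    have herase : (V.erase M).card = N := by
      rw [Finset.card_erase_of_mem hMmem, hN]
      omega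
    have hsum := ih (V.erase M) (fun v hv => hV v (Finset.mem_of_mem_erase hv)) herase
    rw [herase] at hsum
    rw [hN]
    have hsplit : ∑ v ∈ V, (1 : ℝ) / (v : ℝ)
        = (1:ℝ)/(M:ℝ) + ∑ v ∈ V.erase M, (1 : ℝ) / (v : ℝ) :=
      (Finset.add_sum_erase V _ hMmem).symm
    have hMr : ((N:ℝ) + 1) ≤ (M:ℝ) := by exact_mod_cast hcard
    have hinv : (1:ℝ)/(M:ℝ) ≤ 1/((N:ℝ)+1) := by
      apply one_div_le_one_div_of_le (by positivity) hMr
    have hh : (harmonic (N+1) : ℝ) = (harmonic N : ℝ) + 1/((N:ℝ)+1) := by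
      rw [harmonic_succ]
      push_cast
      ring
    rw [hsplit, hh]
    linarith

/-- Sum of reciprocals of first coordinates over distinct (int ≥ 1, bool) pairs. -/
lemma sum_inv_pairs_le (T : Finset (ℤ × Bool)) (hT : ∀ p ∈ T, 1 ≤ p.1) :
    ∑ p ∈ T, (1:ℝ) / ((p.1 : ℝ)) ≤ 2 * (harmonic T.card : ℝ) := by
  have hcomp := Finset.sum_comp (s := T) (fun v : ℤ => (1:ℝ) / (v:ℝ)) Prod.fst
  rw [hcomp]
  have hfib : ∀ v ∈ T.image Prod.fst, (T.filter fun p => p.1 = v).card ≤ 2 := by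
    intro v _
    have : (T.filter fun p => p.1 = v).card ≤ (Finset.univ : Finset Bool).card := by
      apply Finset.card_le_card_of_injOn Prod.snd (fun p _ => Finset.mem_univ _)
      intro p hp q hq hpq
      simp only [Finset.coe_filter, Set.mem_setOf_eq] at hp hq
      exact Prod.ext (hp.2.trans hq.2.symm) hpq
    simpa using this
  have hpos : ∀ v ∈ T.image Prod.fst, (0:ℝ) ≤ 1 / (v:ℝ) := by
    intro v hv
    obtain ⟨p, hp, rfl⟩ := Finset.mem_image.mp hv
    have := hT p hp
    positivity
  have h1 : ∑ v ∈ T.image Prod.fst, (T.filter fun p => p.1 = v).card • ((1:ℝ) / (v:ℝ))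
      ≤ ∑ v ∈ T.image Prod.fst, 2 * ((1:ℝ) / (v:ℝ)) := by
    apply Finset.sum_le_sum
    intro v hv
    rw [nsmul_eq_mul]
    exact mul_le_mul_of_nonneg_right (by exact_mod_cast hfib v hv) (hpos v hv)
  refine h1.trans ?_
  rw [← Finset.mul_sum]
  have h2 : ∑ v ∈ T.image Prod.fst, (1:ℝ) / (v:ℝ) ≤ (harmonic (T.image Prod.fst).card : ℝ) := by
    apply sum_inv_le_harmonic
    intro v hv
    obtain ⟨p, hp, rfl⟩ := Finset.mem_image.mp hv
    exact hT p hp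
  have h3 : (harmonic (T.image Prod.fst).card : ℝ) ≤ (harmonic T.card : ℝ) := by
    exact_mod_cast harmonic_mono (Finset.card_image_le)
  linarith

/-- Key separation-counting bound: sum of inverse torus distances. -/
lemma sum_inv_torusDist_le (S : Finset ℝ) (τ : ℝ) (hτ : τ ∈ S) (Δ : ℝ) (hΔ : 0 < Δ)
    (hsep : ∀ x ∈ S, ∀ y ∈ S, x ≠ y → Δ ≤ torusDist (x - y)) :
    ∑ τ' ∈ S.erase τ, 1 / torusDist (τ - τ') ≤ 2 * (harmonic S.card : ℝ) / Δ := by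
  classical
  set E := S.erase τ with hE
  set d : ℝ → ℝ := fun τ' => Int.fract (τ' - τ) with hd
  have htdist : ∀ τ' ∈ E, torusDist (τ - τ') = min (d τ') (1 - d τ') := by
    intro τ' _
    rw [show τ - τ' = -(τ' - τ) by ring, torusDist_neg, torusDist_eq_min]
  have hsep' : ∀ τ' ∈ E, Δ ≤ d τ' ∧ Δ ≤ 1 - d τ' := by
    intro τ' hτ'
    have hmem := Finset.mem_of_mem_erase hτ'
    have hne : τ ≠ τ' := fun h => (Finset.ne_of_mem_erase hτ') h.symm
    have := hsep τ hτ τ' hmem hne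
    rw [htdist τ' hτ'] at this
    exact ⟨le_trans this (min_le_left _ _), le_trans this (min_le_right _ _)⟩
  have hpair : ∀ τ' ∈ E, ∀ τ'' ∈ E, τ' ≠ τ'' → Δ ≤ |d τ' - d τ''| := by
    intro τ' h1 τ'' h2 hne
    have hm1 := Finset.mem_of_mem_erase h1
    have hm2 := Finset.mem_of_mem_erase h2
    have hsep2 := hsep τ' hm1 τ'' hm2 hne
    have heq : d τ' - d τ'' = (τ' - τ'') + (↑(⌊τ'' - τ⌋ - ⌊τ' - τ⌋) : ℝ) := by
      simp only [hd, Int.fract]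
      push_cast
      ring
    calc Δ ≤ torusDist (τ' - τ'') := hsep2
      _ = torusDist (d τ' - d τ'') := by rw [heq, torusDist_add_int]
      _ ≤ |d τ' - d τ''| := torusDist_le_abs _
  set P : ℝ → ℤ × Bool := fun τ' =>
    (min ⌊d τ' / Δ⌋ ⌊(1 - d τ') / Δ⌋, decide (⌊d τ' / Δ⌋ ≤ ⌊(1 - d τ') / Δ⌋)) with hP
  have hbin : ∀ x y : ℝ, ⌊x / Δ⌋ = ⌊y / Δ⌋ → |x - y| < Δ := by
    intro x y hfl
    have := Int.abs_sub_lt_one_of_floor_eq_floor hfl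
    rw [div_sub_div_same, abs_div, abs_of_pos hΔ, div_lt_one hΔ] at this
    exact this
  have hPinj : ∀ x ∈ E, ∀ y ∈ E, P x = P y → x = y := by
    intro x hx y hy hPxy
    by_contra hne
    have hΔxy := hpair x hx y hy hne
    simp only [hP, Prod.mk.injEq, decide_eq_decide] at hPxy
    obtain ⟨hmin, hbool⟩ := hPxy
    rcases le_or_gt ⌊d x / Δ⌋ ⌊(1 - d x) / Δ⌋ with hcx | hcx
    · have hcy : ⌊d y / Δ⌋ ≤ ⌊(1 - d y) / Δ⌋ := hbool.mp hcx
      rw [min_eq_left hcx, min_eq_left hcy] at hmin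
      exact absurd (hbin _ _ hmin) (not_lt.mpr hΔxy)
    · have hcy : ¬ ⌊d y / Δ⌋ ≤ ⌊(1 - d y) / Δ⌋ := fun h => hcx.not_ge (hbool.mpr h)
      rw [min_eq_right hcx.le, min_eq_right (not_le.mp hcy).le] at hmin
      have := hbin _ _ hmin
      rw [show (1 - d x) - (1 - d y) = -(d x - d y) by ring, abs_neg] at this
      exact absurd this (not_lt.mpr hΔxy)
  have hv1 : ∀ τ' ∈ E, 1 ≤ (P τ').1 := by
    intro τ' hτ'
    obtain ⟨ha, hb⟩ := hsep' τ' hτ'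
    refine le_min ?_ ?_
    · rw [Int.le_floor]
      push_cast
      rw [le_div_iff₀ hΔ, one_mul]
      exact ha
    · rw [Int.le_floor]
      push_cast
      rw [le_div_iff₀ hΔ, one_mul]
      exact hb
  have hlow : ∀ τ' ∈ E, Δ * (((P τ').1 : ℝ)) ≤ torusDist (τ - τ') := by
    intro τ' hτ'
    rw [htdist τ' hτ']
    refine le_min ?_ ?_
    · calc Δ * (((P τ').1 : ℝ)) ≤ Δ * ((⌊d τ' / Δ⌋ : ℝ)) := by
            apply mul_le_mul_of_nonneg_left _ hΔ.le
            exact_mod_cast min_le_left _ _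
        _ ≤ Δ * (d τ' / Δ) := mul_le_mul_of_nonneg_left (Int.floor_le _) hΔ.le
        _ = d τ' := by field_simp
    · calc Δ * (((P τ').1 : ℝ)) ≤ Δ * ((⌊(1 - d τ') / Δ⌋ : ℝ)) := by
            apply mul_le_mul_of_nonneg_left _ hΔ.le
            exact_mod_cast min_le_right _ _
        _ ≤ Δ * ((1 - d τ') / Δ) := mul_le_mul_of_nonneg_left (Int.floor_le _) hΔ.le
        _ = 1 - d τ' := by field_simp
  have hstep : ∑ τ' ∈ E, 1 / torusDist (τ - τ')
      ≤ ∑ τ' ∈ E, (1/Δ) * (1 / (((P τ').1 : ℝ))) := by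
    apply Finset.sum_le_sum
    intro τ' hτ'
    have h1 := hv1 τ' hτ'
    have h1r : (1:ℝ) ≤ (((P τ').1 : ℝ)) := by exact_mod_cast h1
    have hpos : (0:ℝ) < Δ * (((P τ').1 : ℝ)) := by nlinarith
    have := one_div_le_one_div_of_le hpos (hlow τ' hτ')
    calc 1 / torusDist (τ - τ') ≤ 1 / (Δ * (((P τ').1 : ℝ))) := this
      _ = (1/Δ) * (1 / (((P τ').1 : ℝ))) := by
          rw [div_mul_eq_mul_div, one_mul, div_div]
          ring_nf
  refine hstep.trans ?_
  rw [← Finset.mul_sum]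
  have himg : ∑ τ' ∈ E, (1 : ℝ) / (((P τ').1 : ℝ))
      = ∑ p ∈ E.image P, (1:ℝ) / ((p.1 : ℝ)) :=
      (Finset.sum_image (f := fun p : ℤ × Bool => (1:ℝ)/((p.1 : ℝ))) hPinj).symm
  rw [himg]
  have hTbound := sum_inv_pairs_le (E.image P) (by
    intro p hp
    obtain ⟨τ', hτ', rfl⟩ := Finset.mem_image.mp hp
    exact hv1 τ' hτ')
  have hcards : (harmonic (E.image P).card : ℝ) ≤ (harmonic S.card : ℝ) := by
    have h1 : (E.image P).card ≤ E.card := Finset.card_image_le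
    have h2 : E.card ≤ S.card := Finset.card_le_card (Finset.erase_subset _ _)
    exact_mod_cast harmonic_mono (h1.trans h2)
  have hfin : ∑ p ∈ E.image P, (1:ℝ) / ((p.1 : ℝ)) ≤ 2 * (harmonic S.card : ℝ) := by
    refine hTbound.trans ?_
    linarith
  calc (1/Δ) * ∑ p ∈ E.image P, (1:ℝ) / ((p.1 : ℝ))
      ≤ (1/Δ) * (2 * (harmonic S.card : ℝ)) :=
        mul_le_mul_of_nonneg_left hfin (by positivity)
    _ = 2 * (harmonic S.card : ℝ) / Δ := by ring


/-- The interpolation polynomial `η(θ) = ∑_{τ ∈ S} (a_τ D_N(θ−τ) + b_τ D_N'(θ−τ))`. -/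
noncomputable def eta (n : ℕ) (S : Finset ℝ) (a b : ℝ → ℂ) (θ : ℝ) : ℂ :=
  ∑ τ ∈ S, (a τ * Complex.ofReal (DN n (θ - τ)) + b τ * Complex.ofReal (deriv (DN n) (θ - τ)))

/-- Pointwise bound on `DN` in product form. -/
lemma pt_DN (n : ℕ) (θ : ℝ) (ht : 0 < torusDist θ) :
    |DN n θ| ≤ (1/(2*(2*(n:ℝ)+1))) * (1 / torusDist θ) := by
  have h := abs_DN_le n θ ht
  rw [div_mul_div_comm, one_mul]
  exact h

lemma pt_DN1 (n : ℕ) (θ : ℝ) (ht : 0 < torusDist θ) :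
    |DN1 n θ| ≤ (Real.pi/2) * (1 / torusDist θ)
      + (Real.pi/(4*(2*(n:ℝ)+1))) * (1 / torusDist θ)^2 := by
  set t := torusDist θ with htdef
  have h0 := pt_DN n θ ht
  have h1 := abs_DN1_le n θ ht
  have h21 := twon1_pos n
  have hπ := Real.pi_pos
  calc |DN1 n θ| ≤ Real.pi / (2*t) * (1 + |DN n θ|) := h1
    _ ≤ Real.pi / (2*t) * (1 + (1/(2*(2*(n:ℝ)+1))) * (1 / t)) := by
        apply mul_le_mul_of_nonneg_left (add_le_add_right h0 1) (by positivity)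
    _ = (Real.pi/2) * (1/t) + (Real.pi/(4*(2*(n:ℝ)+1))) * (1/t)^2 := by
        field_simp
        ring

lemma pt_DN2 (n : ℕ) (θ : ℝ) (ht : 0 < torusDist θ) :
    |DN2 n θ| ≤ (2*Real.pi^2*(n:ℝ)*((n:ℝ)+1)/(2*(n:ℝ)+1)) * (1 / torusDist θ)
      + (Real.pi^2/2) * (1 / torusDist θ)^2
      + (Real.pi^2/(4*(2*(n:ℝ)+1))) * (1 / torusDist θ)^3 := by
  set t := torusDist θ with htdef
  have h0 := pt_DN n θ ht
  have h1 := pt_DN1 n θ ht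
  have h2 := abs_DN2_le n θ ht
  have h21 := twon1_pos n
  have hπ := Real.pi_pos
  have hn0 : (0:ℝ) ≤ (n:ℝ) := Nat.cast_nonneg n
  calc |DN2 n θ|
      ≤ 4 * Real.pi^2 * (n:ℝ) * ((n:ℝ)+1) * |DN n θ| + Real.pi / t * |DN1 n θ| := h2
    _ ≤ 4 * Real.pi^2 * (n:ℝ) * ((n:ℝ)+1) * ((1/(2*(2*(n:ℝ)+1))) * (1 / t))
        + Real.pi / t * ((Real.pi/2) * (1/t) + (Real.pi/(4*(2*(n:ℝ)+1))) * (1/t)^2) := by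
        apply add_le_add
        · exact mul_le_mul_of_nonneg_left h0 (by positivity)
        · exact mul_le_mul_of_nonneg_left h1 (by positivity)
    _ = (2*Real.pi^2*(n:ℝ)*((n:ℝ)+1)/(2*(n:ℝ)+1)) * (1/t)
        + (Real.pi^2/2) * (1/t)^2 + (Real.pi^2/(4*(2*(n:ℝ)+1))) * (1/t)^3 := by
        field_simp
        ring

/-- The derivative of `eta`. -/
lemma hasDerivAt_eta (n : ℕ) (S : Finset ℝ) (a b : ℝ → ℂ) (θ : ℝ) :
    HasDerivAt (eta n S a b)
      (∑ τ' ∈ S, (a τ' * ((DN1 n (θ - τ') : ℝ) : ℂ) + b τ' * ((DN2 n (θ - τ') : ℝ) : ℂ))) θ := by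
  have hfun : eta n S a b = fun θ => ∑ τ' ∈ S,
      (a τ' * ((DN n (θ - τ') : ℝ) : ℂ) + b τ' * ((DN1 n (θ - τ') : ℝ) : ℂ)) := by
    funext x
    unfold eta
    rw [deriv_DN]
  rw [hfun]
  apply HasDerivAt.fun_sum
  intro τ' _
  have hshift : HasDerivAt (fun θ : ℝ => θ - τ') 1 θ := (hasDerivAt_id θ).sub_const τ'
  have hDN : HasDerivAt (fun θ : ℝ => DN n (θ - τ')) (DN1 n (θ - τ')) θ := by
    have := (hasDerivAt_DN n (θ - τ')).comp θ hshift
    rw [mul_one] at this; exact this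
  have hDN1 : HasDerivAt (fun θ : ℝ => DN1 n (θ - τ')) (DN2 n (θ - τ')) θ := by
    have := (hasDerivAt_DN1 n (θ - τ')).comp θ hshift
    rw [mul_one] at this; exact this
  exact ((hDN.ofReal_comp).const_mul (a τ')).add ((hDN1.ofReal_comp).const_mul (b τ'))

/-- Value of `eta` on a node. -/
lemma eta_eval (n : ℕ) (S : Finset ℝ) (a b : ℝ → ℂ) (τ : ℝ) (hτ : τ ∈ S) :
    eta n S a b τ = a τ + ∑ τ' ∈ S.erase τ,
      (a τ' * ((DN n (τ - τ') : ℝ) : ℂ) + b τ' * ((DN1 n (τ - τ') : ℝ) : ℂ)) := by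
  unfold eta
  rw [deriv_DN, ← Finset.add_sum_erase S _ hτ, sub_self, DN_zero, DN1_zero]
  push_cast
  ring

/-- Derivative of `eta` on a node. -/
lemma deriv_eta_eval (n : ℕ) (S : Finset ℝ) (a b : ℝ → ℂ) (τ : ℝ) (hτ : τ ∈ S) :
    deriv (eta n S a b) τ = b τ * (((DN2 n 0 : ℝ)) : ℂ) + ∑ τ' ∈ S.erase τ,
      (a τ' * ((DN1 n (τ - τ') : ℝ) : ℂ) + b τ' * ((DN2 n (τ - τ') : ℝ) : ℂ)) := by
  rw [(hasDerivAt_eta n S a b τ).deriv, ← Finset.add_sum_erase S _ hτ, sub_self, DN1_zero]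
  push_cast
  ring


lemma arith_S1 (N c p : ℝ) (hN : 1 ≤ N) (hc : 64 ≤ c) (hp3 : 3 < p) (hp : p < 3.15) :
    p * N + (p * N^2)/(2*(2*N+1)*c) ≤ 4 * N := by
  have hc0 : (0:ℝ) < c := by linarith
  have hterm : (p * N^2)/(2*(2*N+1)*c) ≤ N/2 := by
    rw [div_le_iff₀ (by nlinarith)]
    nlinarith
  nlinarith

lemma arith_S2 (N c p : ℝ) (hN : 1 ≤ N) (hc : 64 ≤ c) (hp3 : 3 < p) (hp : p < 3.15) :
    4*p^2*N*(N+1) * (N/(2*N+1)) + (p^2*N^2)/c + (p^2*N^3)/(2*(2*N+1)*c^2)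
      ≤ 3 * (4*p^2/3*N*(N+1)) := by
  have hc0 : (0:ℝ) < c := by linarith
  have h2N : (0:ℝ) < 2*N+1 := by linarith
  have hp0 : (0:ℝ) < p := by linarith
  have hN0 : (0:ℝ) ≤ N := by linarith
  have hK : (0:ℝ) ≤ 4*p^2*N*(N+1) :=
    mul_nonneg (mul_nonneg (by positivity) hN0) (by linarith)
  have ht1 : 4*p^2*N*(N+1) * (N/(2*N+1)) ≤ 2*p^2*N*(N+1) := by
    have hfrac : N/(2*N+1) ≤ 1/2 := by
      rw [div_le_div_iff₀ h2N (by norm_num)]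
      linarith
    calc 4*p^2*N*(N+1) * (N/(2*N+1)) ≤ 4*p^2*N*(N+1) * (1/2) :=
          mul_le_mul_of_nonneg_left hfrac hK
      _ = 2*p^2*N*(N+1) := by ring
  have ht2 : (p^2*N^2)/c ≤ p^2*N*(N+1)/2 := by
    rw [div_le_div_iff₀ hc0 (by norm_num)]
    have h1 : (0:ℝ) ≤ p^2*N^2*(c-2) :=
      mul_nonneg (mul_nonneg (sq_nonneg p) (sq_nonneg N)) (by linarith)
    have h2 : (0:ℝ) ≤ p^2*N*c :=
      mul_nonneg (mul_nonneg (sq_nonneg p) hN0) hc0.le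
    nlinarith [h1, h2]
  have ht3 : (p^2*N^3)/(2*(2*N+1)*c^2) ≤ p^2*N*(N+1)/2 := by
    rw [div_le_div_iff₀ (by positivity) (by norm_num)]
    have hN3 : (0:ℝ) ≤ N^3 := by positivity
    have h1 : (0:ℝ) ≤ p^2*N^3*(4*c^2-2) :=
      mul_nonneg (mul_nonneg (sq_nonneg p) hN3) (by nlinarith)
    have h2 : (0:ℝ) ≤ p^2*N^2*c^2 := by positivity
    have h3 : (0:ℝ) ≤ p^2*N*c^2 :=
      mul_nonneg (mul_nonneg (sq_nonneg p) hN0) (sq_nonneg c)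
    nlinarith [h1, h2, h3]
  nlinarith [ht1, ht2, ht3, hK]

set_option maxHeartbeats 1000000 in
/-- **Size of the interpolation coefficients.** For every `ε ∈ (0,1)` there are `C > 0` and
`N₀` such that for all `n ≥ N₀` and all sufficiently separated finite nonempty `S ⊂ [0,1)`,
any coefficients `a, b` making `η` interpolate value `1` with vanishing derivative on `S`
satisfy `|a_τ| ≤ 1 + ε`, `Re a_τ ≥ 1 − ε` and `|b_τ| ≤ ε/n` for every `τ ∈ S`. -/
theorem dual_certificate_coefficient_bounds (ε : ℝ) (hε0 : 0 < ε) (hε1 : ε < 1) :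
    ∃ C : ℝ, 0 < C ∧ ∃ N₀ : ℕ,
      ∀ n : ℕ, N₀ ≤ n → ∀ S : Finset ℝ, S.Nonempty → ↑S ⊆ Set.Ico (0 : ℝ) 1 →
        (∀ τ ∈ S, ∀ τ' ∈ S, τ ≠ τ' →
          C * (1 + Real.log S.card) / n ≤ torusDist (τ - τ')) →
        ∀ a b : ℝ → ℂ,
          (∀ τ ∈ S, eta n S a b τ = 1 ∧ deriv (eta n S a b) τ = 0) →
          ∀ τ ∈ S,
            ‖a τ‖ ≤ 1 + ε ∧ 1 - ε ≤ (a τ).re ∧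
              ‖b τ‖ ≤ ε / n := by
  have hπ := Real.pi_pos
  have hπ3 := Real.pi_gt_three
  have hπ315 := Real.pi_lt_d2
  set C := 64 / ε with hCdef
  have hC0 : 0 < C := by rw [hCdef]; positivity
  have hC64 : (64:ℝ) ≤ C := by
    rw [hCdef, le_div_iff₀ hε0]
    nlinarith
  have hCε : C * ε = 64 := by
    rw [hCdef]
    field_simp
  refine ⟨C, hC0, 1, ?_⟩
  intro n hn S hS hSsub hsep a b hab
  have hN1 : (1:ℝ) ≤ (n:ℝ) := by exact_mod_cast hn
  have hNpos : (0:ℝ) < (n:ℝ) := by linarith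
  set k := S.card with hk
  have hk1 : 1 ≤ k := Finset.card_pos.mpr hS
  set L := 1 + Real.log (k:ℝ) with hLdef
  have hL1 : (1:ℝ) ≤ L := by
    have : (0:ℝ) ≤ Real.log (k:ℝ) := Real.log_nonneg (by exact_mod_cast hk1)
    rw [hLdef]; linarith
  have hL0 : (0:ℝ) < L := by linarith
  set Δ := C * L / (n:ℝ) with hΔdef
  have hΔ0 : 0 < Δ := by rw [hΔdef]; positivity
  set Qr := 4 * Real.pi^2 / 3 * (n:ℝ) * ((n:ℝ)+1) with hQdef
  have hQ0 : 0 < Qr := by rw [hQdef]; positivity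
  have hπ9 : (9:ℝ) < Real.pi^2 := by nlinarith
  have hQ12 : 12 * (n:ℝ)^2 ≤ Qr := by
    rw [hQdef]
    linarith only [mul_nonneg (by nlinarith : (0:ℝ) ≤ 4*Real.pi^2/3 - 12)
      (by positivity : (0:ℝ) ≤ (n:ℝ)*((n:ℝ)+1)), hNpos.le]
  -- suprema
  set A := S.sup' hS (fun τ => ‖a τ‖) with hAdef
  set Bb := S.sup' hS (fun τ => ‖b τ‖) with hBbdef
  have hAle : ∀ τ ∈ S, ‖a τ‖ ≤ A := by
    intro τ h
    rw [hAdef]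
    exact Finset.le_sup' (fun τ => ‖a τ‖) h
  have hBle : ∀ τ ∈ S, ‖b τ‖ ≤ Bb := by
    intro τ h
    rw [hBbdef]
    exact Finset.le_sup' (fun τ => ‖b τ‖) h
  obtain ⟨τ₁, hτ₁⟩ := id hS
  have hA0 : 0 ≤ A := le_trans (norm_nonneg _) (hAle τ₁ hτ₁)
  have hBb0 : 0 ≤ Bb := le_trans (norm_nonneg _) (hBle τ₁ hτ₁)
  set u := (n:ℝ) * Bb with hudef
  have hu0 : 0 ≤ u := by rw [hudef]; positivity
  clear hCdef
  clear_value C k L Δ Qr A Bb u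
  -- ===== key per-node inequalities =====
  have key : ∀ τ ∈ S,
      C * ‖a τ - 1‖ ≤ A + 4 * (n:ℝ) * Bb ∧
      C * (Qr * ‖b τ‖) ≤ 4 * (n:ℝ) * A + 3 * Qr * Bb := by
    intro τ hτ
    have hEmem : ∀ τ' ∈ S.erase τ, τ' ∈ S ∧ τ ≠ τ' := by
      intro τ' h
      exact ⟨Finset.mem_of_mem_erase h, fun he => (Finset.ne_of_mem_erase h) he.symm⟩
    have hΔle : ∀ τ' ∈ S.erase τ, Δ ≤ torusDist (τ - τ') := by
      intro τ' h
      obtain ⟨hm, hne⟩ := hEmem τ' h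
      exact hsep τ hτ τ' hm hne
    have htpos : ∀ τ' ∈ S.erase τ, 0 < torusDist (τ - τ') :=
      fun τ' h => lt_of_lt_of_le hΔ0 (hΔle τ' h)
    -- sums of inverse powers
    set T1 := ∑ τ' ∈ S.erase τ, (1 / torusDist (τ - τ')) with hT1def
    set T2 := ∑ τ' ∈ S.erase τ, (1 / torusDist (τ - τ'))^2 with hT2def
    set T3 := ∑ τ' ∈ S.erase τ, (1 / torusDist (τ - τ'))^3 with hT3def
    clear_value T1 T2 T3
    have hT1b : T1 ≤ 2 * (n:ℝ) / C := by
      rw [hT1def]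
      have h := sum_inv_torusDist_le S τ hτ Δ hΔ0 hsep
      have hh : (harmonic S.card : ℝ) ≤ L := by
        rw [hLdef, hk]
        exact harmonic_le_one_add_log _
      calc ∑ τ' ∈ S.erase τ, (1 / torusDist (τ - τ'))
          ≤ 2 * (harmonic S.card : ℝ) / Δ := h
        _ ≤ 2 * L / Δ := by gcongr
        _ = 2 * (n:ℝ) / C := by
            rw [hΔdef]
            field_simp
    have hw : ∀ τ' ∈ S.erase τ, 1 / torusDist (τ - τ') ≤ (n:ℝ)/C := by
      intro τ' h
      have h1 := one_div_le_one_div_of_le hΔ0 (hΔle τ' h)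
      refine h1.trans ?_
      rw [hΔdef, one_div_div, div_le_div_iff₀ (by positivity) hC0]
      linarith only [mul_nonneg (mul_nonneg hNpos.le hC0.le)
        (by linarith only [hL1] : (0:ℝ) ≤ L - 1)]
    have hT2b : T2 ≤ ((n:ℝ)/C) * T1 := by
      rw [hT2def, hT1def, Finset.mul_sum]
      apply Finset.sum_le_sum
      intro τ' h
      have ht := htpos τ' h
      rw [sq]
      exact mul_le_mul_of_nonneg_right (hw τ' h) (by positivity)
    have hT3b : T3 ≤ ((n:ℝ)/C) * T2 := by
      rw [hT3def, hT2def, Finset.mul_sum]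
      apply Finset.sum_le_sum
      intro τ' h
      have ht := htpos τ' h
      rw [pow_succ, mul_comm]
      exact mul_le_mul_of_nonneg_right (hw τ' h) (by positivity)
    have hT2b' : T2 ≤ 2 * (n:ℝ)^2 / C^2 := by
      calc T2 ≤ ((n:ℝ)/C) * T1 := hT2b
        _ ≤ ((n:ℝ)/C) * (2 * (n:ℝ) / C) := mul_le_mul_of_nonneg_left hT1b (by positivity)
        _ = 2 * (n:ℝ)^2 / C^2 := by ring
    have hT3b' : T3 ≤ 2 * (n:ℝ)^3 / C^3 := by
      calc T3 ≤ ((n:ℝ)/C) * T2 := hT3b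
        _ ≤ ((n:ℝ)/C) * (2 * (n:ℝ)^2 / C^2) := mul_le_mul_of_nonneg_left hT2b' (by positivity)
        _ = 2 * (n:ℝ)^3 / C^3 := by ring
    -- kernel sums
    set Sg0 := ∑ τ' ∈ S.erase τ, |DN n (τ - τ')| with hSg0def
    set Sg1 := ∑ τ' ∈ S.erase τ, |DN1 n (τ - τ')| with hSg1def
    set Sg2 := ∑ τ' ∈ S.erase τ, |DN2 n (τ - τ')| with hSg2def
    clear_value Sg0 Sg1 Sg2
    have h21 := twon1_pos n
    have hS0 : Sg0 ≤ (1/(2*(2*(n:ℝ)+1))) * T1 := by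
      rw [hSg0def, hT1def, Finset.mul_sum]
      exact Finset.sum_le_sum (fun τ' h => pt_DN n _ (htpos τ' h))
    have hS1 : Sg1 ≤ (Real.pi/2) * T1 + (Real.pi/(4*(2*(n:ℝ)+1))) * T2 := by
      rw [hSg1def, hT1def, hT2def, Finset.mul_sum, Finset.mul_sum, ← Finset.sum_add_distrib]
      exact Finset.sum_le_sum (fun τ' h => pt_DN1 n _ (htpos τ' h))
    have hS2 : Sg2 ≤ (2*Real.pi^2*(n:ℝ)*((n:ℝ)+1)/(2*(n:ℝ)+1)) * T1
        + (Real.pi^2/2) * T2 + (Real.pi^2/(4*(2*(n:ℝ)+1))) * T3 := by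
      rw [hSg2def, hT1def, hT2def, hT3def, Finset.mul_sum, Finset.mul_sum, Finset.mul_sum,
        ← Finset.sum_add_distrib, ← Finset.sum_add_distrib]
      exact Finset.sum_le_sum (fun τ' h => pt_DN2 n _ (htpos τ' h))
    -- numeric bounds: C*Sg0 ≤ 1, C*Sg1 ≤ 4n, C*Sg2 ≤ 3*Qr
    have hSg0C : C * Sg0 ≤ 1 := by
      have h := hS0.trans (mul_le_mul_of_nonneg_left hT1b (by positivity))
      have h2 := mul_le_mul_of_nonneg_left h hC0.le
      have heq : C * ((1/(2*(2*(n:ℝ)+1))) * (2 * (n:ℝ) / C)) = (n:ℝ)/(2*(n:ℝ)+1) := by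
        field_simp
      rw [heq] at h2
      refine h2.trans ?_
      rw [div_le_one h21]
      linarith only [hNpos]
    have hSg1C : C * Sg1 ≤ 4 * (n:ℝ) := by
      have h := hS1.trans (add_le_add
        (mul_le_mul_of_nonneg_left hT1b (by positivity))
        (mul_le_mul_of_nonneg_left hT2b' (by positivity)))
      have h2 := mul_le_mul_of_nonneg_left h hC0.le
      have heq : C * ((Real.pi/2) * (2 * (n:ℝ) / C)
            + (Real.pi/(4*(2*(n:ℝ)+1))) * (2 * (n:ℝ)^2 / C^2))
          = Real.pi * (n:ℝ) + (Real.pi * (n:ℝ)^2)/(2*(2*(n:ℝ)+1)*C) := by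
        field_simp
        ring
      rw [heq] at h2
      refine h2.trans ?_
      exact arith_S1 (n:ℝ) C Real.pi hN1 hC64 hπ3 hπ315
    have hSg2C : C * Sg2 ≤ 3 * Qr := by
      have h := hS2.trans (add_le_add (add_le_add
        (mul_le_mul_of_nonneg_left hT1b (by positivity))
        (mul_le_mul_of_nonneg_left hT2b' (by positivity)))
        (mul_le_mul_of_nonneg_left hT3b' (by positivity)))
      have h2 := mul_le_mul_of_nonneg_left h hC0.le
      have heq : C * ((2*Real.pi^2*(n:ℝ)*((n:ℝ)+1)/(2*(n:ℝ)+1)) * (2 * (n:ℝ) / C)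
            + (Real.pi^2/2) * (2 * (n:ℝ)^2 / C^2)
            + (Real.pi^2/(4*(2*(n:ℝ)+1))) * (2 * (n:ℝ)^3 / C^3))
          = 4*Real.pi^2*(n:ℝ)*((n:ℝ)+1) * ((n:ℝ)/(2*(n:ℝ)+1))
            + (Real.pi^2 * (n:ℝ)^2)/C + (Real.pi^2 * (n:ℝ)^3)/(2*(2*(n:ℝ)+1)*C^2) := by
        field_simp
        ring
      rw [heq] at h2
      refine h2.trans ?_
      rw [hQdef]
      exact arith_S2 (n:ℝ) C Real.pi hN1 hC64 hπ3 hπ315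
    -- residual sums
    set R1 := ∑ τ' ∈ S.erase τ,
      (a τ' * ((DN n (τ - τ') : ℝ) : ℂ) + b τ' * ((DN1 n (τ - τ') : ℝ) : ℂ)) with hR1def
    set R2 := ∑ τ' ∈ S.erase τ,
      (a τ' * ((DN1 n (τ - τ') : ℝ) : ℂ) + b τ' * ((DN2 n (τ - τ') : ℝ) : ℂ)) with hR2def
    clear_value R1 R2
    have hR1b : ‖R1‖ ≤ A * Sg0 + Bb * Sg1 := by
      rw [hR1def]
      refine (norm_sum_le _ _).trans ?_
      rw [hSg0def, hSg1def, Finset.mul_sum, Finset.mul_sum, ← Finset.sum_add_distrib]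
      apply Finset.sum_le_sum
      intro τ' h
      obtain ⟨hm, _⟩ := hEmem τ' h
      refine (norm_add_le _ _).trans ?_
      rw [norm_mul, norm_mul, Complex.norm_real, Complex.norm_real, Real.norm_eq_abs, Real.norm_eq_abs]
      exact add_le_add
        (mul_le_mul_of_nonneg_right (hAle τ' hm) (abs_nonneg _))
        (mul_le_mul_of_nonneg_right (hBle τ' hm) (abs_nonneg _))
    have hR2b : ‖R2‖ ≤ A * Sg1 + Bb * Sg2 := by
      rw [hR2def]
      refine (norm_sum_le _ _).trans ?_
      rw [hSg1def, hSg2def, Finset.mul_sum, Finset.mul_sum, ← Finset.sum_add_distrib]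
      apply Finset.sum_le_sum
      intro τ' h
      obtain ⟨hm, _⟩ := hEmem τ' h
      refine (norm_add_le _ _).trans ?_
      rw [norm_mul, norm_mul, Complex.norm_real, Complex.norm_real, Real.norm_eq_abs, Real.norm_eq_abs]
      exact add_le_add
        (mul_le_mul_of_nonneg_right (hAle τ' hm) (abs_nonneg _))
        (mul_le_mul_of_nonneg_right (hBle τ' hm) (abs_nonneg _))
    -- the interpolation equations
    have h1 := (hab τ hτ).1
    rw [eta_eval n S a b τ hτ] at h1
    have ha1 : a τ - 1 = -R1 := by
      rw [hR1def]
      linear_combination h1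
    have habs1 : ‖a τ - 1‖ ≤ A * Sg0 + Bb * Sg1 := by
      rw [ha1, norm_neg]
      exact hR1b
    have h2 := (hab τ hτ).2
    rw [deriv_eta_eval n S a b τ hτ, DN2_zero] at h2
    have hb1 : b τ * ((Qr : ℝ) : ℂ) = R2 := by
      rw [hR2def, hQdef]
      push_cast at h2 ⊢
      linear_combination -h2
    have habs2 : Qr * ‖b τ‖ ≤ A * Sg1 + Bb * Sg2 := by
      have : ‖b τ * ((Qr : ℝ) : ℂ)‖ = ‖b τ‖ * Qr := by
        rw [norm_mul, Complex.norm_real, Real.norm_eq_abs, abs_of_pos hQ0]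
      rw [hb1] at this
      rw [mul_comm Qr]
      rw [← this]
      exact hR2b
    constructor
    · calc C * ‖a τ - 1‖ ≤ C * (A * Sg0 + Bb * Sg1) :=
            mul_le_mul_of_nonneg_left habs1 hC0.le
        _ = A * (C * Sg0) + Bb * (C * Sg1) := by ring
        _ ≤ A * 1 + Bb * (4 * (n:ℝ)) := add_le_add
            (mul_le_mul_of_nonneg_left hSg0C hA0)
            (mul_le_mul_of_nonneg_left hSg1C hBb0)
        _ = A + 4 * (n:ℝ) * Bb := by ring
    · calc C * (Qr * ‖b τ‖) ≤ C * (A * Sg1 + Bb * Sg2) :=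
            mul_le_mul_of_nonneg_left habs2 hC0.le
        _ = A * (C * Sg1) + Bb * (C * Sg2) := by ring
        _ ≤ A * (4 * (n:ℝ)) + Bb * (3 * Qr) := add_le_add
            (mul_le_mul_of_nonneg_left hSg1C hA0)
            (mul_le_mul_of_nonneg_left hSg2C hBb0)
        _ = 4 * (n:ℝ) * A + 3 * Qr * Bb := by ring
  -- ===== solve the system =====
  obtain ⟨τA, hτA, hAeq⟩ := Finset.exists_mem_eq_sup' hS (fun τ => ‖a τ‖)
  obtain ⟨τB, hτB, hBeq⟩ := Finset.exists_mem_eq_sup' hS (fun τ => ‖b τ‖)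
  have htriA : A ≤ 1 + ‖a τA - 1‖ := by
    rw [hAdef, hAeq]
    calc ‖a τA‖ = ‖(a τA - 1) + 1‖ := by rw [sub_add_cancel]
      _ ≤ ‖a τA - 1‖ + ‖(1:ℂ)‖ := norm_add_le _ _
      _ = 1 + ‖a τA - 1‖ := by rw [norm_one]; ring
  have hCA : C * A ≤ C + A + 4 * u := by
    have h1 := (key τA hτA).1
    have h2 := mul_le_mul_of_nonneg_left htriA hC0.le
    rw [hudef]
    linarith only [h1, h2]
  have hCu : 3 * (C * u) ≤ A + 9 * u := by
    have h2 := (key τB hτB).2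
    have hBbeq : ‖b τB‖ = Bb := by rw [hBbdef, ← hBeq]
    rw [hBbeq] at h2
    -- multiply by n : C*Qr*u ≤ 4n²A + 3Qr·u ; use 12n² ≤ Qr
    have h3 := mul_le_mul_of_nonneg_left h2 hNpos.le
    have h4 : 12 * (n:ℝ)^2 * A ≤ Qr * A := mul_le_mul_of_nonneg_right hQ12 hA0
    have h5 : (3 * (C * u)) * Qr ≤ (A + 9 * u) * Qr := by
      rw [hudef]
      linarith only [h3, h4]
    exact le_of_mul_le_mul_right h5 hQ0
  have h183 : 183 * u ≤ A := by
    linarith only [hCu, hu0, mul_nonneg (sub_nonneg.mpr hC64) hu0]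
  have hA2 : A ≤ 2 := by
    by_contra hcon
    push_neg at hcon
    have hprod : 0 ≤ (C - 64) * (A - 2) :=
      mul_nonneg (by linarith only [hC64]) (by linarith only [hcon])
    linarith only [hCA, h183, hu0, hprod, hC64, hcon]
  have hu1 : u ≤ 1 := by linarith only [h183, hA2, hu0]
  -- ===== final bounds =====
  intro τ₀ hτ₀
  obtain ⟨k1, k2⟩ := key τ₀ hτ₀
  have hsmall : ‖a τ₀ - 1‖ ≤ ε := by
    have h : C * ‖a τ₀ - 1‖ ≤ C * ε := by
      linarith only [k1, hudef, hA2, h183, hu0, hCε]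
    exact le_of_mul_le_mul_left h hC0
  have goal3 : (n:ℝ) * ‖b τ₀‖ ≤ ε := by
    have h3 := mul_le_mul_of_nonneg_left k2 hNpos.le
    have h4 : 12 * (n:ℝ)^2 * A ≤ Qr * A := mul_le_mul_of_nonneg_right hQ12 hA0
    have h5 : (3 * (C * ((n:ℝ) * ‖b τ₀‖))) * Qr ≤ (A + 9 * u) * Qr := by
      rw [hudef]
      have hb := hBle τ₀ hτ₀
      have hmul : (n:ℝ) * (C * (Qr * ‖b τ₀‖)) ≤ (n:ℝ) * (C * (Qr * Bb)) := by
        have := mul_le_mul_of_nonneg_left hb (by positivity : (0:ℝ) ≤ (n:ℝ) * (C * Qr))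
        calc (n:ℝ) * (C * (Qr * ‖b τ₀‖))
            = (n:ℝ) * (C * Qr) * ‖b τ₀‖ := by ring
          _ ≤ (n:ℝ) * (C * Qr) * Bb := this
          _ = (n:ℝ) * (C * (Qr * Bb)) := by ring
      linarith only [h3, h4, hmul]
    have h6 : 3 * (C * ((n:ℝ) * ‖b τ₀‖)) ≤ A + 9 * u :=
      le_of_mul_le_mul_right h5 hQ0
    have h7 : (3 * C) * ((n:ℝ) * ‖b τ₀‖) ≤ (3 * C) * ε := by
      linarith only [h6, hA2, hu1, hCε, hu0]
    exact le_of_mul_le_mul_left h7 (by positivity)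
  refine ⟨?_, ?_, ?_⟩
  · calc ‖a τ₀‖ = ‖(a τ₀ - 1) + 1‖ := by rw [sub_add_cancel]
      _ ≤ ‖a τ₀ - 1‖ + ‖(1:ℂ)‖ := norm_add_le _ _
      _ ≤ ε + 1 := by rw [norm_one]; linarith
      _ = 1 + ε := by ring
  · have hre := Complex.abs_re_le_norm (a τ₀ - 1)
    rw [Complex.sub_re, Complex.one_re] at hre
    have := abs_le.mp (hre.trans hsmall)
    linarith [this.1]
  · rw [le_div_iff₀ hNpos]
    linarith [goal3]
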